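/- arXiv:0710.2284 — 4 statements merged into one kernel-verified Lean document; each statement's English description precedes it below -/
import Mathlib

section
/- Any symmetry-preserving extension of a peer-to-peer network is strongly connected. That is, if G = (V,E) is a peer-to-peer network and G' = (V',E') is a symmetry-preserving extension of G, then for every pair of vertices a, b of G' there is a directed path in G' from a to b and a directed path from b to a. -/
/-- An automorphism of a communication graph with edge relation `E`:
a permutation `σ` such that `(v,w) ∈ E` implies `(σ v, σ w) ∈ E`. -/
def IsAuto {α : Type*} (E : α → α → Prop) (σ : Equiv.Perm α) : Prop :=
  ∀ v w, E v w → E (σ v) (σ w)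

/-- The orbit of `v` under the permutation `σ`: `{σ^p v | p ≥ 0}`. -/
def orbitOf {α : Type*} (σ : Equiv.Perm α) (v : α) : Set α :=
  {w | ∃ p : ℕ, (σ ^ p) v = w}

/-- A permutation is well-balanced if the orbits of all elements have the same cardinality. -/
def WellBalanced {α : Type*} (σ : Equiv.Perm α) : Prop :=
  ∀ v w, (orbitOf σ v).ncard = (orbitOf σ w).ncard

/-- A peer-to-peer network: a finite directed graph without self-loops, with at least
two vertices, strongly connected, directly connected, and admitting a non-trivial
well-balanced automorphism (i.e. one of period `orderOf σ > 1`). -/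
structure IsP2P {α : Type*} [Fintype α] (E : α → α → Prop) : Prop where
  irrefl : ∀ v, ¬ E v v
  two_le : 2 ≤ Fintype.card α
  strong : ∀ a b : α, Relation.ReflTransGen E a b
  direct : ∀ a b : α, a ≠ b → E a b ∨ E b a
  wamoti : ∃ σ : Equiv.Perm α, IsAuto E σ ∧ WellBalanced σ ∧ 1 < orderOf σ

/-- `G' = (β, E')` is a symmetry-preserving extension of the peer-to-peer network
`G = (α, E)`, where `f : α → β` is the inclusion of the original vertices and
`S v` is the block of `v ∈ α` in the partition of the extension's vertices. -/
structure IsSPE {α β : Type*} [Fintype α] [Fintype β] (E : α → α → Prop)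
    (E' : β → β → Prop) (f : α → β) (S : α → Set β) : Prop where
  irrefl : ∀ b, ¬ E' b b
  f_inj : Function.Injective f
  partition : ∀ b : β, ∃! v : α, b ∈ S v
  mem_f : ∀ v, f v ∈ S v
  strong : ∀ v : α, ∀ b ∈ S v, b ≠ f v →
    Relation.ReflTransGen E' (f v) b ∧ Relation.ReflTransGen E' b (f v)
  edges : ∀ v w : α, v ≠ w → ((∃ a ∈ S v, ∃ b ∈ S w, E' a b) ↔ E v w)
  lift : ∀ σ : Equiv.Perm α, IsAuto E σ →
    ∃ ι : Equiv.Perm β, IsAuto E' ι ∧ (∀ v, ι (f v) = f (σ v)) ∧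
      (∀ v, ι '' S v = S (σ v))

/-- Any symmetry-preserving extension of a peer-to-peer network is strongly connected. -/
theorem spe_strongly_connected {α β : Type*} [Fintype α] [Fintype β]
    {E : α → α → Prop} {E' : β → β → Prop} {f : α → β} {S : α → Set β}
    (hG : IsP2P E) (hext : IsSPE E E' f S) :
    ∀ a b : β, Relation.ReflTransGen E' a b ∧ Relation.ReflTransGen E' b a := by
  -- Every block element connects both ways to its base point `f v`.
  have hblock : ∀ v : α, ∀ b ∈ S v,
      Relation.ReflTransGen E' (f v) b ∧ Relation.ReflTransGen E' b (f v) := by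
    intro v b hb
    by_cases h : b = f v
    · subst h; exact ⟨.refl, .refl⟩
    · exact hext.strong v b hb h
  -- An edge in G gives a path between base points in G'.
  have hstep : ∀ v w : α, E v w →
      Relation.ReflTransGen E' (f v) (f w) := by
    intro v w hvw
    have hne : v ≠ w := by rintro rfl; exact hG.irrefl v hvw
    obtain ⟨a, ha, b, hb, hab⟩ := (hext.edges v w hne).mpr hvw
    exact ((hblock v a ha).1.trans (.single hab)).trans (hblock w b hb).2
  -- Paths in G lift to paths in G' between base points.
  have hpath : ∀ v w : α, Relation.ReflTransGen E' (f v) (f w) := by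
    intro v w
    have := hG.strong v w
    induction this with
    | refl => exact .refl
    | tail _ h ih => exact ih.trans (hstep _ _ h)
  intro a b
  obtain ⟨v, hv, -⟩ := hext.partition a
  obtain ⟨w, hw, -⟩ := hext.partition b
  constructor
  · exact ((hblock v a hv).2.trans (hpath v w)).trans (hblock w b hw).1
  · exact ((hblock w b hw).2.trans (hpath w v)).trans (hblock v a hv).1
end

section
/- Let G' = (V',E') be a symmetry-preserving extension of a peer-to-peer network G = (V,E) with partition {S_v}_{v∈V}, let K = |V'|, and let H be the graph obtained from G' by adding, for each v ∈ V, K fresh vertices I_v = {i_{v,1}, …, i_{v,K}} together with the edges E_v = {(v, i_{v,1})} ∪ ⋃_{k=1}^{K−1} {(i_{v,k}, i_{v,k+1}), (i_{v,k+1}, v)} ∪ ⋃_{w ∈ S_v} {(i_{v,K}, w)}; that is, H = (V' ∪ ⋃_{v∈V} I_v, E' ∪ ⋃_{v∈V} E_v). If σ is a non-trivial well-balanced automorphism of G' with σ(V) = V and σ(S_v) = S_{σ(v)} for all v ∈ V, then the map τ defined by τ(u) = σ(u) for u ∈ V' and τ(i_{v,k}) = i_{σ(v),k} for all v ∈ V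 and 1 ≤ k ≤ K is a non-trivial well-balanced automorphism of H. In particular, wamoti(H) ≠ ∅. -/
/-- The edge relation of the graph `H` obtained from the extension `G' = (β, E')` by
adding, for each `v ∈ α`, `K = |β|` fresh vertices `i_{v,1}, …, i_{v,K}` (encoded as
`Sum.inr (v, k)` with `k : Fin K` zero-based, so `Sum.inr (v, k)` is `i_{v,k+1}`) and
the edges `(v, i_{v,1})`, `(i_{v,k}, i_{v,k+1})` and `(i_{v,k+1}, v)` for
`1 ≤ k ≤ K-1`, and `(i_{v,K}, w)` for `w ∈ S v`. -/
def HAdj {α β : Type*} [Fintype β] (E' : β → β → Prop) (f : α → β) (S : α → Set β) :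
    β ⊕ α × Fin (Fintype.card β) → β ⊕ α × Fin (Fintype.card β) → Prop :=
  fun x y =>
    match x, y with
    | Sum.inl a, Sum.inl b => E' a b
    | Sum.inl a, Sum.inr (v, k) => a = f v ∧ (k : ℕ) = 0
    | Sum.inr (v, k), Sum.inl b =>
        (1 ≤ (k : ℕ) ∧ b = f v) ∨ ((k : ℕ) = Fintype.card β - 1 ∧ b ∈ S v)
    | Sum.inr (v, k), Sum.inr (w, l) => v = w ∧ (l : ℕ) = (k : ℕ) + 1

/-!
The new vertices `i_{v,k}` are permuted exactly as `g` permutes the original vertices, in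
`|β|` parallel copies. Since `f` intertwines `g` with `σ` and is injective, the orbit of `i_{v,k}`
is as large as the `σ`-orbit of `f v`, so every orbit of `τ` has the common orbit size of `σ`;
and `τ` restricts to `σ` on `β`, so it is non-trivial.
-/

open Function

section Orbits

variable {α β : Type*}

theorem Function.Semiconj.orbitOf_eq_image {φ : α → β} {σ : Equiv.Perm α}
    {τ : Equiv.Perm β} (h : Semiconj φ σ τ) (a : α) : orbitOf τ (φ a) = φ '' orbitOf σ a := by
  have hpow (p : ℕ) : (τ ^ p) (φ a) = φ ((σ ^ p) a) := by
    simp only [Equiv.Perm.coe_pow, (h.iterate_right p).eq]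
  ext x
  simp only [orbitOf, Set.mem_image, Set.mem_ofPred_eq, hpow]
  exact ⟨fun ⟨p, hp⟩ => ⟨_, ⟨p, rfl⟩, hp⟩, fun ⟨_, ⟨p, hp⟩, hx⟩ => ⟨p, hp ▸ hx⟩⟩

theorem Function.Semiconj.ncard_orbitOf_eq {φ : α → β} {σ : Equiv.Perm α} {τ : Equiv.Perm β}
    (h : Semiconj φ σ τ) (hφ : Injective φ) (a : α) :
    (orbitOf τ (φ a)).ncard = (orbitOf σ a).ncard := by
  rw [h.orbitOf_eq_image, Set.ncard_image_of_injective _ hφ]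

theorem WellBalanced.of_forall_exists_ncard_eq {σ : Equiv.Perm α} {τ : Equiv.Perm β}
    (hσ : WellBalanced σ) (h : ∀ y, ∃ x, (orbitOf τ y).ncard = (orbitOf σ x).ncard) :
    WellBalanced τ := by
  intro y y'
  obtain ⟨x, hx⟩ := h y
  obtain ⟨x', hx'⟩ := h y'
  rw [hx, hx', hσ x x']

theorem one_lt_orderOf_sumCongr [Finite α] [Finite β] {σ : Equiv.Perm α} (τ : Equiv.Perm β)
    (hσ : 1 < orderOf σ) : 1 < orderOf (Equiv.sumCongr σ τ) := by
  have hdvd : orderOf σ ∣ orderOf (Equiv.sumCongr σ τ) := by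
    rw [show Equiv.sumCongr σ τ = Equiv.Perm.sumCongrHom α β (σ, τ) from rfl,
      orderOf_injective _ Equiv.Perm.sumCongrHom_injective]
    exact orderOf_fst_dvd_orderOf
  exact hσ.trans_le (Nat.le_of_dvd (orderOf_pos _) hdvd)

end Orbits

section Extension

variable {α β : Type*} {f : α → β}

theorem isAuto_hAdj_sumCongr [Fintype β] {E' : β → β → Prop} {S : α → Set β}
    {σ : Equiv.Perm β} {g : Equiv.Perm α} (hσ : IsAuto E' σ)
    (hfg : ∀ v, σ (f v) = f (g v)) (hS : ∀ v, Set.MapsTo σ (S v) (S (g v))) :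
    IsAuto (HAdj E' f S)
      (Equiv.sumCongr σ (Equiv.prodCongr g (Equiv.refl (Fin (Fintype.card β))))) := by
  rintro (a | ⟨v, k⟩) (b | ⟨w, l⟩) h
  · exact hσ a b h
  · obtain ⟨rfl, hl⟩ := h
    exact ⟨hfg w, hl⟩
  · rcases h with ⟨hk, rfl⟩ | ⟨hk, hb⟩
    · exact Or.inl ⟨hk, hfg v⟩
    · exact Or.inr ⟨hk, hS v hb⟩
  · obtain ⟨rfl, hl⟩ := h
    exact ⟨rfl, hl⟩

theorem WellBalanced.sumCongr_prodCongr_refl {σ : Equiv.Perm β} {g : Equiv.Perm α}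
    {γ : Type*} (hσ : WellBalanced σ) (hf : Injective f) (hfg : ∀ v, σ (f v) = f (g v)) :
    WellBalanced (Equiv.sumCongr σ (Equiv.prodCongr g (Equiv.refl γ))) := by
  refine hσ.of_forall_exists_ncard_eq ?_
  rintro (b | ⟨v, k⟩)
  · exact ⟨b, Semiconj.ncard_orbitOf_eq (φ := Sum.inl) (fun _ => rfl) Sum.inl_injective b⟩
  · refine ⟨f v, ?_⟩
    have hcopy : Injective fun w : α => (Sum.inr (w, k) : β ⊕ α × γ) :=
      fun _ _ h => by simpa using h
    rw [Semiconj.ncard_orbitOf_eq (φ := fun w => Sum.inr (w, k)) (fun _ => rfl) hcopy v,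
      Semiconj.ncard_orbitOf_eq (fun w => (hfg w).symm) hf v]

end Extension

theorem extended_auto_nontrivial_wellBalanced_general {α β : Type*} [Fintype α] [Fintype β]
    {E : α → α → Prop} {E' : β → β → Prop} {f : α → β} {S : α → Set β}
    (hext : IsSPE E E' f S)
    (σ : Equiv.Perm β) (g : Equiv.Perm α)
    (hauto : IsAuto E' σ) (hwb : WellBalanced σ) (hnt : 1 < orderOf σ)
    (hfg : ∀ v, σ (f v) = f (g v)) (hS : ∀ v, σ '' S v = S (g v)) :
    IsAuto (HAdj E' f S)
        (Equiv.sumCongr σ (Equiv.prodCongr g (Equiv.refl (Fin (Fintype.card β))))) ∧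
      WellBalanced
        (Equiv.sumCongr σ (Equiv.prodCongr g (Equiv.refl (Fin (Fintype.card β))))) ∧
      1 < orderOf
        (Equiv.sumCongr σ (Equiv.prodCongr g (Equiv.refl (Fin (Fintype.card β))))) := by
  have hmaps (v : α) : Set.MapsTo σ (S v) (S (g v)) :=
    Set.mapsTo_iff_image_subset.mpr (hS v).subset
  exact ⟨isAuto_hAdj_sumCongr hauto hfg hmaps, hwb.sumCongr_prodCongr_refl hext.f_inj hfg,
    one_lt_orderOf_sumCongr _ hnt⟩

/-- If `σ` is a non-trivial well-balanced automorphism of `G'` with `σ(V) = V`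
(witnessed by the induced permutation `g` of `α` with `σ ∘ f = f ∘ g`) and
`σ(S v) = S (σ v)` for all `v ∈ V`, then the map `τ` acting as `σ` on `V'` and
sending `i_{v,k}` to `i_{σ(v),k}` is a non-trivial well-balanced automorphism of `H`;
in particular `wamoti(H) ≠ ∅`. -/
theorem extended_auto_nontrivial_wellBalanced {α β : Type*} [Fintype α] [Fintype β]
    {E : α → α → Prop} {E' : β → β → Prop} {f : α → β} {S : α → Set β}
    (hG : IsP2P E) (hext : IsSPE E E' f S)
    (σ : Equiv.Perm β) (g : Equiv.Perm α)
    (hauto : IsAuto E' σ) (hwb : WellBalanced σ) (hnt : 1 < orderOf σ)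
    (hfg : ∀ v, σ (f v) = f (g v)) (hS : ∀ v, σ '' S v = S (g v)) :
    IsAuto (HAdj E' f S)
        (Equiv.sumCongr σ (Equiv.prodCongr g (Equiv.refl (Fin (Fintype.card β))))) ∧
      WellBalanced
        (Equiv.sumCongr σ (Equiv.prodCongr g (Equiv.refl (Fin (Fintype.card β))))) ∧
      1 < orderOf
        (Equiv.sumCongr σ (Equiv.prodCongr g (Equiv.refl (Fin (Fintype.card β))))) :=
  extended_auto_nontrivial_wellBalanced_general hext σ g hauto hwb hnt hfg hS
end

section
/- Let G' = (V',E') be a symmetry-preserving extension of a peer-to-peer network G = (V,E) with partition {S_v}_{v∈V}, let K = |V'|, and let H = (V' ∪ ⋃_{v∈V} I_v, E' ∪ ⋃_{v∈V} E_v) be the graph obtained from G' by adding, for each v ∈ V, K fresh vertices I_v = {i_{v,1}, …, i_{v,K}} and the edges E_v = {(v, i_{v,1})} ∪ ⋃_{k=1}^{K−1} {(i_{v,k}, i_{v,k+1}), (i_{v,k+1}, v)} ∪ ⋃_{w ∈ S_v} {(i_{v,K}, w)}. Then every automorphism τ of H satisfies: τ(V') = V', τ(V) = V, the set ⋃_{v∈V}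 I_v is invariant under τ, the restriction of τ to V' is an automorphism of G' with τ(S_v) = S_{τ(v)} for all v ∈ V, and τ(i_{v,k}) = i_{τ(v),k} for all v ∈ V and 1 ≤ k ≤ K. -/
lemma isAuto_rev {g : Type*} [Finite g] {E : g → g → Prop} {τ : Equiv.Perm g}
    (h : IsAuto E τ) : ∀ x y, E (τ x) (τ y) → E x y := by
  intro x y hxy
  have hinj : Function.Injective (fun p : g × g => (τ p.1, τ p.2)) := by
    intro p q hpq
    obtain ⟨h1, h2⟩ := Prod.mk.injEq _ _ _ _ ▸ hpq
    exact Prod.ext (τ.injective h1) (τ.injective h2)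
  have himg : (fun p : g × g => (τ p.1, τ p.2)) '' {p | E p.1 p.2} = {p | E p.1 p.2} := by
    apply Set.eq_of_subset_of_ncard_le
    · rintro _ ⟨p, hp, rfl⟩; exact h p.1 p.2 hp
    · rw [Set.ncard_image_of_injective _ hinj]
    · exact Set.toFinite _
  have : (τ x, τ y) ∈ {p : g × g | E p.1 p.2} := hxy
  rw [← himg] at this
  obtain ⟨⟨a, b⟩, hab, heq⟩ := this
  obtain ⟨h1, h2⟩ := Prod.mk.injEq _ _ _ _ ▸ heq
  rw [← τ.injective h1, ← τ.injective h2]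
  exact hab

lemma last_step {g : Type*} {r : g → g → Prop} {a b : g}
    (h : Relation.ReflTransGen r a b) (hne : a ≠ b) : ∃ c, r c b := by
  rcases Relation.ReflTransGen.cases_tail h with hba | ⟨c, _, hc⟩
  · exact absurd hba.symm hne
  · exact ⟨c, hc⟩

lemma exists_in_edge {α β : Type*} [Fintype α] [Fintype β]
    {E : α → α → Prop} {E' : β → β → Prop} {f : α → β} {S : α → Set β}
    (hG : IsP2P E) (hext : IsSPE E E' f S) (b : β) : ∃ a, E' a b := by
  obtain ⟨v, hbv, -⟩ := hext.partition b
  by_cases hbf : b = f v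
  · subst hbf
    obtain ⟨u, hu⟩ := Fintype.exists_ne_of_one_lt_card (by have := hG.two_le; omega) v
    obtain ⟨u', hu'v⟩ := last_step (hG.strong u v) hu
    have hne : u' ≠ v := fun h => hG.irrefl v (h ▸ hu'v)
    obtain ⟨a, ha, b', hb', hE⟩ := (hext.edges u' v hne).mpr hu'v
    by_cases h2 : b' = f v
    · exact ⟨a, h2 ▸ hE⟩
    · exact last_step ((hext.strong v b' hb' h2).2) h2
  · exact last_step ((hext.strong v b hbv hbf).1) (Ne.symm hbf)

/-- Every automorphism `τ` of the graph `H` (obtained from the symmetry-preserving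
extension `G' = (β, E')` of the peer-to-peer network `G = (α, E)` by attaching the
identifying structures `I_v`) keeps `V'` invariant, keeps `V` invariant, keeps the set
of added vertices `⋃ I_v` invariant, restricts to an automorphism of `G'` mapping each
block `S v` onto `S (τ v)`, and maps each `i_{v,k}` to `i_{τ(v),k}`. -/
theorem auto_of_H_rigid {α β : Type*} [Fintype α] [Fintype β]
    {E : α → α → Prop} {E' : β → β → Prop} {f : α → β} {S : α → Set β}
    (hG : IsP2P E) (hext : IsSPE E E' f S)
    (τ : Equiv.Perm (β ⊕ α × Fin (Fintype.card β)))
    (hτ : IsAuto (HAdj E' f S) τ) :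
    τ '' Set.range (Sum.inl : β → β ⊕ α × Fin (Fintype.card β)) =
        Set.range (Sum.inl : β → β ⊕ α × Fin (Fintype.card β)) ∧
      τ '' Set.range (fun v : α => (Sum.inl (f v) : β ⊕ α × Fin (Fintype.card β))) =
        Set.range (fun v : α => (Sum.inl (f v) : β ⊕ α × Fin (Fintype.card β))) ∧
      τ '' Set.range (Sum.inr : α × Fin (Fintype.card β) → β ⊕ α × Fin (Fintype.card β)) =
        Set.range (Sum.inr : α × Fin (Fintype.card β) → β ⊕ α × Fin (Fintype.card β)) ∧
      (∀ a b a' b' : β, τ (Sum.inl a) = Sum.inl a' → τ (Sum.inl b) = Sum.inl b' →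
        E' a b → E' a' b') ∧
      (∀ v w : α, τ (Sum.inl (f v)) = Sum.inl (f w) →
        τ '' (Sum.inl '' S v) = Sum.inl '' S w) ∧
      (∀ v w : α, ∀ k : Fin (Fintype.card β), τ (Sum.inl (f v)) = Sum.inl (f w) →
        τ (Sum.inr (v, k)) = Sum.inr (w, k)) := by
  classical
  have hK2 : 2 ≤ Fintype.card β :=
    le_trans hG.two_le (Fintype.card_le_of_injective f hext.f_inj)
  have hK0 : 0 < Fintype.card β := by omega
  have hKm : Fintype.card β - 1 < Fintype.card β := by omega
  have hiff : ∀ x y, HAdj E' f S (τ x) (τ y) → HAdj E' f S x y := isAuto_rev hτ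
  -- unique in-neighbor of chain vertices
  have huniq : ∀ (p : α × Fin (Fintype.card β)) (y z),
      HAdj E' f S y (Sum.inr p) → HAdj E' f S z (Sum.inr p) → y = z := by
    rintro ⟨v, k⟩ y z hy hz
    have key : ∀ u, HAdj E' f S u (Sum.inr (v, k)) →
        u = if (k : ℕ) = 0 then Sum.inl (f v)
            else Sum.inr (v, ⟨(k : ℕ) - 1, by omega⟩) := by
      rintro (a | ⟨w, l⟩) hu
      · obtain ⟨rfl, hk0⟩ := hu
        simp [hk0]
      · obtain ⟨rfl, hkl⟩ := hu
        have hne : (k : ℕ) ≠ 0 := by omega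
        simp only [hne, if_false]
        have hlv : l = (⟨(k : ℕ) - 1, by omega⟩ : Fin (Fintype.card β)) :=
          Fin.ext (show (l : ℕ) = (k : ℕ) - 1 by omega)
        exact congrArg (fun t => Sum.inr (w, t)) hlv
    rw [key y hy, key z hz]
  -- every inl vertex has two distinct in-neighbors
  have htwo : ∀ b : β, ∃ y z, y ≠ z ∧
      HAdj E' f S y (Sum.inl b) ∧ HAdj E' f S z (Sum.inl b) := by
    intro b
    obtain ⟨a, ha⟩ := exists_in_edge hG hext b
    obtain ⟨v, hbv, -⟩ := hext.partition b
    exact ⟨Sum.inl a, Sum.inr (v, ⟨Fintype.card β - 1, hKm⟩), by simp, ha,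
      Or.inr ⟨rfl, hbv⟩⟩
  -- τ maps inl vertices to inl vertices
  have hmaps : ∀ b : β, ∃ b', τ (Sum.inl b) = Sum.inl b' := by
    intro b
    obtain ⟨y, z, hyz, hy, hz⟩ := htwo b
    cases hx : τ (Sum.inl b) with
    | inl b' => exact ⟨b', rfl⟩
    | inr p =>
        have h1 := hτ _ _ hy
        have h2 := hτ _ _ hz
        rw [hx] at h1 h2
        exact absurd (τ.injective (huniq p _ _ h1 h2)) hyz
  have himage : ∀ (A : Set (β ⊕ α × Fin (Fintype.card β))), τ '' A ⊆ A → τ '' A = A :=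
    fun A hA => Set.eq_of_subset_of_ncard_le hA
      (by rw [Set.ncard_image_of_injective _ τ.injective])
  have h1 : τ '' Set.range (Sum.inl : β → β ⊕ α × Fin (Fintype.card β)) =
      Set.range Sum.inl := by
    apply himage
    rintro _ ⟨_, ⟨b, rfl⟩, rfl⟩
    obtain ⟨b', hb'⟩ := hmaps b
    exact ⟨b', hb'.symm⟩
  have hsurjl : ∀ b' : β, ∃ b : β, τ (Sum.inl b) = Sum.inl b' := by
    intro b'
    have : (Sum.inl b' : β ⊕ α × Fin (Fintype.card β)) ∈ τ '' Set.range Sum.inl := by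
      rw [h1]; exact ⟨b', rfl⟩
    obtain ⟨_, ⟨b, rfl⟩, h⟩ := this
    exact ⟨b, h⟩
  have hmapr : ∀ p : α × Fin (Fintype.card β), ∃ q, τ (Sum.inr p) = Sum.inr q := by
    intro p
    cases h : τ (Sum.inr p) with
    | inl b' =>
        obtain ⟨b, hb⟩ := hsurjl b'
        exact absurd (τ.injective (hb.trans h.symm)) (by simp)
    | inr q => exact ⟨q, rfl⟩
  have h3 : τ '' Set.range (Sum.inr : α × Fin (Fintype.card β) → β ⊕ α × Fin (Fintype.card β)) =
      Set.range Sum.inr := by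
    apply himage
    rintro _ ⟨_, ⟨p, rfl⟩, rfl⟩
    obtain ⟨q, hq⟩ := hmapr p
    exact ⟨q, hq.symm⟩
  -- τ maps V to V together with the base of the chain
  have hV : ∀ v : α, ∃ w : α, τ (Sum.inl (f v)) = Sum.inl (f w) ∧
      τ (Sum.inr (v, ⟨0, hK0⟩)) = Sum.inr (w, ⟨0, hK0⟩) := by
    intro v
    have hedge : HAdj E' f S (Sum.inl (f v)) (Sum.inr (v, ⟨0, hK0⟩)) := ⟨rfl, rfl⟩
    have hE := hτ _ _ hedge
    obtain ⟨a, ha⟩ := hmaps (f v)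
    obtain ⟨⟨w, l⟩, hq⟩ := hmapr (v, ⟨0, hK0⟩)
    rw [ha, hq] at hE
    obtain ⟨rfl, hl0⟩ := hE
    exact ⟨w, ha, by rw [hq]; exact congrArg Sum.inr (Prod.ext rfl (Fin.ext hl0))⟩
  -- chains are mapped levelwise
  have hchain : ∀ v w : α, τ (Sum.inl (f v)) = Sum.inl (f w) →
      ∀ n (hn : n < Fintype.card β),
        τ (Sum.inr (v, ⟨n, hn⟩)) = Sum.inr (w, ⟨n, hn⟩) := by
    intro v w hvw n
    induction n with
    | zero =>
        intro hn
        obtain ⟨w', hw'1, hw'2⟩ := hV v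
        have : w' = w := hext.f_inj (Sum.inl.inj (hw'1.symm.trans hvw))
        subst this
        exact hw'2
    | succ n ih =>
        intro hn
        have hn' : n < Fintype.card β := by omega
        have hedge : HAdj E' f S (Sum.inr (v, ⟨n, hn'⟩)) (Sum.inr (v, ⟨n + 1, hn⟩)) :=
          ⟨rfl, rfl⟩
        have h2 := hτ _ _ hedge
        rw [ih hn'] at h2
        obtain ⟨⟨u, l⟩, hq⟩ := hmapr (v, ⟨n + 1, hn⟩)
        rw [hq] at h2
        obtain ⟨rfl, hl⟩ := h2
        rw [hq]
        exact congrArg Sum.inr (Prod.ext rfl (Fin.ext hl))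
  have hkgen : ∀ v w : α, ∀ k : Fin (Fintype.card β),
      τ (Sum.inl (f v)) = Sum.inl (f w) → τ (Sum.inr (v, k)) = Sum.inr (w, k) :=
    fun v w k hvw => hchain v w hvw k.val k.isLt
  have h2 : τ '' Set.range (fun v : α => (Sum.inl (f v) : β ⊕ α × Fin (Fintype.card β))) =
      Set.range (fun v : α => (Sum.inl (f v) : β ⊕ α × Fin (Fintype.card β))) := by
    apply himage
    rintro _ ⟨_, ⟨v, rfl⟩, rfl⟩
    obtain ⟨w, hw, -⟩ := hV v
    exact ⟨w, hw.symm⟩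
  have h4 : ∀ a b a' b' : β, τ (Sum.inl a) = Sum.inl a' → τ (Sum.inl b) = Sum.inl b' →
      E' a b → E' a' b' := by
    intro a b a' b' ha hb h
    have := hτ _ _ (show HAdj E' f S (Sum.inl a) (Sum.inl b) from h)
    rw [ha, hb] at this
    exact this
  have h5 : ∀ v w : α, τ (Sum.inl (f v)) = Sum.inl (f w) →
      τ '' (Sum.inl '' S v) = Sum.inl '' S w := by
    intro v w hvw
    have hkK := hkgen v w ⟨Fintype.card β - 1, hKm⟩ hvw
    ext x
    constructor
    · rintro ⟨_, ⟨b, hb, rfl⟩, rfl⟩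
      obtain ⟨b', hb'⟩ := hmaps b
      rw [hb']
      have hedge : HAdj E' f S (Sum.inr (v, ⟨Fintype.card β - 1, hKm⟩)) (Sum.inl b) :=
        Or.inr ⟨rfl, hb⟩
      have hE := hτ _ _ hedge
      rw [hkK, hb'] at hE
      rcases hE with ⟨-, rfl⟩ | ⟨-, hbS⟩
      · exact ⟨f w, hext.mem_f w, rfl⟩
      · exact ⟨b', hbS, rfl⟩
    · rintro ⟨b', hb', rfl⟩
      obtain ⟨b, hb⟩ := hsurjl b'
      have hedge : HAdj E' f S (Sum.inr (w, ⟨Fintype.card β - 1, hKm⟩)) (Sum.inl b') :=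
        Or.inr ⟨rfl, hb'⟩
      have hE := hiff (Sum.inr (v, ⟨Fintype.card β - 1, hKm⟩)) (Sum.inl b)
        (by rw [hkK, hb]; exact hedge)
      have hbv : b ∈ S v := by
        rcases hE with ⟨-, rfl⟩ | ⟨-, h⟩
        exacts [hext.mem_f v, h]
      exact ⟨Sum.inl b, ⟨b, hbv, rfl⟩, hb⟩
  exact ⟨h1, h2, h3, h4, h5, hkgen⟩
end

section
/- Let G' = (V',E') be a symmetry-preserving extension of a peer-to-peer network G = (V,E) with partition {S_v}_{v∈V}, let K = |V'|, and let H = (V' ∪ ⋃_{v∈V} I_v, E' ∪ ⋃_{v∈V} E_v) be the graph obtained from G' by adding, for each v ∈ V, K fresh vertices I_v = {i_{v,1}, …, i_{v,K}} and the edges E_v = {(v, i_{v,1})} ∪ ⋃_{k=1}^{K−1} {(i_{v,k}, i_{v,k+1}), (i_{v,k+1}, v)} ∪ ⋃_{w ∈ S_v} {(i_{v,K}, w)}. Then H is itself a symmetry-preserving extension of G, with the partition given by the blocks S_v ∪ I_v for v ∈ V. -/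
/-- The block of `v ∈ α` in the partition of the vertices of `H`: the original block
`S v` together with the added vertices `I_v = {i_{v,1}, …, i_{v,K}}`. -/
def Tblock {α β : Type*} [Fintype β] (S : α → Set β) (v : α) :
    Set (β ⊕ α × Fin (Fintype.card β)) :=
  {x | (∃ b ∈ S v, x = Sum.inl b) ∨ (∃ k : Fin (Fintype.card β), x = Sum.inr (v, k))}

open Relation

/-- The graph `H`, obtained from the symmetry-preserving extension `G' = (β, E')` of
the peer-to-peer network `G = (α, E)` by attaching the identifying structures `I_v`,
is itself a symmetry-preserving extension of `G`, with blocks `S v ∪ I_v`. -/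
theorem H_is_spe {α β : Type*} [Fintype α] [Fintype β]
    {E : α → α → Prop} {E' : β → β → Prop} {f : α → β} {S : α → Set β}
    (hG : IsP2P E) (hext : IsSPE E E' f S) :
    IsSPE E (HAdj E' f S) (fun v => Sum.inl (f v)) (Tblock S) := by
  obtain ⟨hirr, hfinj, hpart, hmem, hstr, hedg, hlift⟩ := hext
  have hK2 : 2 ≤ Fintype.card β :=
    le_trans hG.two_le (Fintype.card_le_of_injective f hfinj)
  have path_fwd : ∀ (v : α) (n : ℕ) (h : n < Fintype.card β),
      ReflTransGen (HAdj E' f S) (Sum.inl (f v)) (Sum.inr (v, ⟨n, h⟩)) := by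
    intro v n
    induction n with
    | zero => intro h; exact ReflTransGen.single ⟨rfl, rfl⟩
    | succ m ih =>
      intro h
      exact (ih (Nat.lt_of_succ_lt h)).tail ⟨rfl, rfl⟩
  have path_back : ∀ (v : α) (k : Fin (Fintype.card β)),
      ReflTransGen (HAdj E' f S) (Sum.inr (v, k)) (Sum.inl (f v)) := by
    intro v k
    rcases Nat.eq_zero_or_pos (k : ℕ) with h0 | h1
    · have h1lt : 1 < Fintype.card β := hK2
      refine ReflTransGen.head (b := Sum.inr (v, ⟨1, h1lt⟩)) ⟨rfl, by simp [h0]⟩ ?_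
      exact ReflTransGen.single (Or.inl ⟨le_refl 1, rfl⟩)
    · exact ReflTransGen.single (Or.inl ⟨h1, rfl⟩)
  constructor
  · rintro (b | ⟨v, k⟩) h
    · exact hirr b h
    · exact absurd h.2 (by omega)
  · intro a b h
    exact hfinj (Sum.inl.inj h)
  · rintro (b | ⟨v, k⟩)
    · obtain ⟨v, hv, huniq⟩ := hpart b
      refine ⟨v, Or.inl ⟨b, hv, rfl⟩, ?_⟩
      rintro w (⟨c, hc, hcb⟩ | ⟨k, hk⟩)
      · cases Sum.inl.inj hcb; exact huniq w hc
      · exact absurd hk (by simp)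
    · refine ⟨v, Or.inr ⟨k, rfl⟩, ?_⟩
      rintro w (⟨c, hc, hcb⟩ | ⟨k', hk⟩)
      · exact absurd hcb (by simp)
      · obtain ⟨h1, h2⟩ := Prod.mk.injEq .. ▸ Sum.inr.inj hk
        exact h1.symm ▸ rfl
  · intro v
    exact Or.inl ⟨f v, hmem v, rfl⟩
  · rintro v x hx hne
    rcases hx with ⟨b, hb, rfl⟩ | ⟨k, rfl⟩
    · have hbne : b ≠ f v := fun h => hne (by rw [h])
      obtain ⟨p1, p2⟩ := hstr v b hb hbne
      exact ⟨p1.lift Sum.inl (fun a b h => h), p2.lift Sum.inl (fun a b h => h)⟩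
    · refine ⟨?_, path_back v k⟩
      have := path_fwd v k.1 k.2
      simpa using this
  · intro v w hvw
    constructor
    · rintro ⟨a, ha, b, hb, hab⟩
      rcases ha with ⟨a', ha', rfl⟩ | ⟨k, rfl⟩ <;>
        rcases hb with ⟨b', hb', rfl⟩ | ⟨l, rfl⟩
      · exact (hedg v w hvw).mp ⟨a', ha', b', hb', hab⟩
      · obtain ⟨rfl, -⟩ := hab
        obtain ⟨u, -, hu⟩ := hpart (f w)
        exact absurd ((hu v ha').trans (hu w (hmem w)).symm) hvw
      · rcases hab with ⟨-, rfl⟩ | ⟨-, hb2⟩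
        · obtain ⟨u, -, hu⟩ := hpart (f v)
          exact absurd ((hu v (hmem v)).trans (hu w hb').symm) hvw
        · obtain ⟨u, -, hu⟩ := hpart b'
          exact absurd ((hu v hb2).trans (hu w hb').symm) hvw
      · exact absurd hab.1 hvw
    · intro hE
      obtain ⟨a, ha, b, hb, hab⟩ := (hedg v w hvw).mpr hE
      exact ⟨Sum.inl a, Or.inl ⟨a, ha, rfl⟩, Sum.inl b, Or.inl ⟨b, hb, rfl⟩, hab⟩
  · intro σ hσ
    obtain ⟨ι, hι, hιf, hιS⟩ := hlift σ hσ
    refine ⟨Equiv.sumCongr ι (Equiv.prodCongr σ (Equiv.refl _)), ?_, ?_, ?_⟩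
    · rintro (a | ⟨v, k⟩) (b | ⟨w, l⟩) h
      · exact hι a b h
      · obtain ⟨rfl, h0⟩ := h
        exact ⟨hιf w, h0⟩
      · rcases h with ⟨hk, rfl⟩ | ⟨hk, hb⟩
        · exact Or.inl ⟨hk, hιf v⟩
        · exact Or.inr ⟨hk, by rw [← hιS v]; exact ⟨b, hb, rfl⟩⟩
      · obtain ⟨rfl, hl⟩ := h
        exact ⟨rfl, hl⟩
    · intro v
      simp [hιf v]
    · intro v
      ext x
      simp only [Set.mem_image]
      constructor
      · rintro ⟨y, hy, rfl⟩
        rcases hy with ⟨b, hb, rfl⟩ | ⟨k, rfl⟩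
        · exact Or.inl ⟨ι b, by rw [← hιS v]; exact ⟨b, hb, rfl⟩, rfl⟩
        · exact Or.inr ⟨k, rfl⟩
      · rintro (⟨c, hc, hx⟩ | ⟨k, hx⟩)
        · rw [← hιS v] at hc
          obtain ⟨b, hb, rfl⟩ := hc
          exact ⟨Sum.inl b, Or.inl ⟨b, hb, rfl⟩, hx.symm⟩
        · exact ⟨Sum.inr (v, k), Or.inr ⟨k, rfl⟩, hx.symm⟩
end
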